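/- arXiv:1904.12567 — 3 statements merged into one kernel-verified Lean document; each statement's English description precedes it below -/
import Mathlib

section
/- The inclusion map ι_X : X → X_Γ is an isometric embedding. -/
open scoped ENNReal
open MeasureTheory Set

noncomputable section

/-- Points of the disjoint union `X ⊔ (S × [0,l])` used to build the glued space `X_Γ`,
where `S` is the circle of circumference `l` (with its quotient / arc metric). -/
abbrev GluePts (X : Type*) (l : ℝ) := X ⊕ (AddCircle l × Set.Icc (0:ℝ) l)

/-- The Euclidean product distance on the cylinder `S × [0,l]`. -/
def cylDist {l : ℝ} (a b : AddCircle l × Set.Icc (0:ℝ) l) : ℝ :=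
  Real.sqrt (dist a.1 b.1 ^ 2 + dist a.2 b.2 ^ 2)

/-- Same, `ℝ≥0∞`-valued. -/
def eCylDist {l : ℝ} (a b : AddCircle l × Set.Icc (0:ℝ) l) : ℝ≥0∞ :=
  ENNReal.ofReal (cylDist a b)

open Classical in
/-- Cost of a single step of a chain in the disjoint union: within one of the two pieces
one pays its distance; jumping between the pieces is free exactly at identified pairs
`γ(p) ∼ (p,0)` and costs `∞` otherwise. -/
def glueStep {X : Type*} [MetricSpace X] {l : ℝ} (γ : AddCircle l → X) :
    GluePts X l → GluePts X l → ℝ≥0∞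
  | Sum.inl x, Sum.inl y => edist x y
  | Sum.inr a, Sum.inr b => eCylDist a b
  | Sum.inl x, Sum.inr b => if x = γ b.1 ∧ (b.2 : ℝ) = 0 then 0 else ∞
  | Sum.inr a, Sum.inl y => if y = γ a.1 ∧ (a.2 : ℝ) = 0 then 0 else ∞

/-- Total cost of a chain (a list of points of the disjoint union). -/
def chainCost {X : Type*} [MetricSpace X] {l : ℝ} (γ : AddCircle l → X) :
    List (GluePts X l) → ℝ≥0∞
  | [] => 0
  | [_] => 0
  | a :: b :: t => glueStep γ a b + chainCost γ (b :: t)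

/-- The quotient (pseudo-)distance of the metric gluing `X_Γ = (X ⊔ S×[0,l]) / (γ(p) ∼ (p,0))`:
the infimum of total costs of finite chains joining the two points. -/
def quotDist {X : Type*} [MetricSpace X] {l : ℝ} (γ : AddCircle l → X)
    (x y : GluePts X l) : ℝ≥0∞ :=
  ⨅ (c : List (GluePts X l)) (_ : c.head? = some x ∧ c.getLast? = some y), chainCost γ c

/-- `γ : S → X` (with `S` the circle of circumference `l`) is a unit speed curve:
the length of the restriction of (the periodic lift of) `γ` to any interval `[a,b]`
equals `b - a`. This expresses that `γ` is the constant speed parametrization of a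
closed rectifiable curve of length `l`. -/
def IsUnitSpeed {X : Type*} [MetricSpace X] {l : ℝ} (γ : AddCircle l → X) : Prop :=
  ∀ a b : ℝ, a ≤ b → eVariationOn (fun t : ℝ => γ t) (Set.Icc a b) = ENNReal.ofReal (b - a)

/-- The canonical retraction `P_Γ : X_Γ → X`: identity on `X` and `(p,t) ↦ γ(p)` on the collar. -/
def glueProj {X : Type*} [MetricSpace X] {l : ℝ} (γ : AddCircle l → X) :
    GluePts X l → X
  | Sum.inl x => x
  | Sum.inr a => γ a.1

end

/-! The retraction `glueProj γ : X_Γ → X` is 1-Lipschitz for the chain costs, since `γ` is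
1-Lipschitz and the cylinder distance dominates the distance of the circle coordinates.
It restricts to the identity on `X`, so `ι_X` cannot shrink distances; the one-step chain
shows it does not stretch them either. -/

lemma dist_fst_le_cylDist {l : ℝ} (a b : AddCircle l × Set.Icc (0:ℝ) l) :
    dist a.1 b.1 ≤ cylDist a b :=
  Real.le_sqrt_of_sq_le (le_add_of_nonneg_right (sq_nonneg _))

section Retraction

variable {X : Type*} [MetricSpace X] {l : ℝ} {γ : AddCircle l → X}

lemma edist_glueProj_le_glueStep (hγ : LipschitzWith 1 γ) (a b : GluePts X l) :
    edist (glueProj γ a) (glueProj γ b) ≤ glueStep γ a b := by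
  classical
  rcases a with x | p <;> rcases b with y | q
  · exact le_rfl
  case inl.inr | inr.inl =>
    simp only [glueProj, glueStep]
    split_ifs with h
    · simp [h.1]
    · exact le_top
  · calc edist (γ p.1) (γ q.1) ≤ edist p.1 q.1 := by simpa using hγ p.1 q.1
      _ = ENNReal.ofReal (dist p.1 q.1) := edist_dist _ _
      _ ≤ eCylDist p q := ENNReal.ofReal_le_ofReal (dist_fst_le_cylDist p q)

lemma edist_glueProj_le_chainCost (hγ : LipschitzWith 1 γ) :
    ∀ (c : List (GluePts X l)) {x y : GluePts X l},
      c.head? = some x → c.getLast? = some y →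
      edist (glueProj γ x) (glueProj γ y) ≤ chainCost γ c
  | [], _, _, hx, _ => by simp at hx
  | [a], _, _, hx, hy => by
    obtain rfl : a = _ := Option.some.inj hx
    obtain rfl : a = _ := Option.some.inj hy
    simp
  | a :: b :: t, _, y, hx, hy => by
    obtain rfl : a = _ := Option.some.inj hx
    rw [List.getLast?_cons_cons] at hy
    calc edist (glueProj γ a) (glueProj γ y)
        ≤ edist (glueProj γ a) (glueProj γ b) + edist (glueProj γ b) (glueProj γ y) :=
          edist_triangle _ _ _
      _ ≤ glueStep γ a b + chainCost γ (b :: t) :=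
          add_le_add (edist_glueProj_le_glueStep hγ a b)
            (edist_glueProj_le_chainCost hγ (b :: t) rfl hy)

lemma edist_glueProj_le_quotDist (hγ : LipschitzWith 1 γ) (x y : GluePts X l) :
    edist (glueProj γ x) (glueProj γ y) ≤ quotDist γ x y :=
  le_iInf₂ fun c hc => edist_glueProj_le_chainCost hγ c hc.1 hc.2

end Retraction

lemma quotDist_inl_le {X : Type*} [MetricSpace X] {l : ℝ} (γ : AddCircle l → X) (x y : X) :
    quotDist γ (Sum.inl x) (Sum.inl y) ≤ edist x y :=
  calc quotDist γ (Sum.inl x) (Sum.inl y) ≤ chainCost γ [Sum.inl x, Sum.inl y] :=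
        iInf₂_le _ ⟨rfl, rfl⟩
    _ = edist x y := by simp [chainCost, glueStep]

theorem inclusion_isometric_embedding_general
    (X : Type*) [MetricSpace X] (l : ℝ)
    (γ : AddCircle l → X) (hγLip : LipschitzWith 1 γ) :
    ∀ x y : X, quotDist γ (Sum.inl x) (Sum.inl y) = edist x y := fun x y =>
  le_antisymm (quotDist_inl_le γ x y) (edist_glueProj_le_quotDist hγLip (Sum.inl x) (Sum.inl y))

/-- The inclusion map `ι_X : X → X_Γ` is an isometric embedding:
the quotient distance of the gluing between two points of `X` equals their
original distance in `X`. -/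
theorem inclusion_isometric_embedding
    (X : Type*) [MetricSpace X] [CompleteSpace X] (l : ℝ) (hl : 0 < l)
    (γ : AddCircle l → X) (hγLip : LipschitzWith 1 γ) (hγspeed : IsUnitSpeed γ) :
    ∀ x y : X, quotDist γ (Sum.inl x) (Sum.inl y) = edist x y :=
  inclusion_isometric_embedding_general X l γ hγLip
end

section
/- The inclusion map ι : S × [0,l] → X_Γ is 1-Lipschitz, and its restriction to S × (0,l] is a local isometry. -/
open scoped ENNReal
open MeasureTheory Set

/-!
The two-point chain `[b, c]` gives the upper bound. For the lower bound, `collarPotential y`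
is `1`-Lipschitz for the step cost and vanishes at `y`, so it bounds the quotient distance to `y`
from below: a chain that leaves the collar must descend to height `0` and climb back, paying at
least `b.2 + c.2`. Near a point of height `a.2 > 0` (within `a.2 / 2`) this exceeds the
cylinder distance, so the cheapest chain stays in the collar.
-/

section Collar

variable {X : Type*} [MetricSpace X] {l : ℝ}

def toL2 (a : AddCircle l × Icc (0:ℝ) l) : WithLp 2 (AddCircle l × ℝ) :=
  WithLp.toLp 2 (a.1, (a.2 : ℝ))

theorem cylDist_eq_dist_toL2 (a b : AddCircle l × Icc (0:ℝ) l) :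
    cylDist a b = dist (toL2 a) (toL2 b) := by
  rw [WithLp.prod_dist_eq_of_L2]
  rfl

theorem eCylDist_eq_edist_toL2 (a b : AddCircle l × Icc (0:ℝ) l) :
    eCylDist a b = edist (toL2 a) (toL2 b) := by
  rw [eCylDist, cylDist_eq_dist_toL2, edist_dist]

theorem eCylDist_self (a : AddCircle l × Icc (0:ℝ) l) : eCylDist a a = 0 := by
  rw [eCylDist_eq_edist_toL2, edist_self]

theorem eCylDist_comm (a b : AddCircle l × Icc (0:ℝ) l) : eCylDist a b = eCylDist b a := by
  rw [eCylDist_eq_edist_toL2, eCylDist_eq_edist_toL2, edist_comm]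

theorem eCylDist_triangle (a b c : AddCircle l × Icc (0:ℝ) l) :
    eCylDist a c ≤ eCylDist a b + eCylDist b c := by
  simp only [eCylDist_eq_edist_toL2]
  exact edist_triangle _ _ _

theorem dist_snd_le_cylDist (a b : AddCircle l × Icc (0:ℝ) l) :
    dist (a.2 : ℝ) b.2 ≤ cylDist a b := by
  rw [cylDist, ← Real.sqrt_sq dist_nonneg]
  exact Real.sqrt_le_sqrt (le_add_of_nonneg_left (sq_nonneg _))

theorem cylDist_lt_snd_add_snd_of_lt_half {a b c : AddCircle l × Icc (0:ℝ) l}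
    (hb : cylDist a b < a.2 / 2) (hc : cylDist a c < a.2 / 2) : cylDist b c < b.2 + c.2 := by
  have hbc : cylDist b c ≤ cylDist a b + cylDist a c := by
    simp only [cylDist_eq_dist_toL2]
    exact dist_triangle_left _ _ _
  have hb₂ := (abs_sub_lt_iff.mp ((dist_snd_le_cylDist a b).trans_lt hb)).1
  have hc₂ := (abs_sub_lt_iff.mp ((dist_snd_le_cylDist a c).trans_lt hc)).1
  linarith

theorem ofReal_sub_snd_le_eCylDist (a b : AddCircle l × Icc (0:ℝ) l) :
    ENNReal.ofReal ((a.2 : ℝ) - b.2) ≤ eCylDist a b :=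
  ENNReal.ofReal_le_ofReal <| (le_abs_self _).trans <| (Real.dist_eq _ _ ▸ dist_snd_le_cylDist a b)

variable (γ : AddCircle l → X)

theorem quotDist_le_chainCost {x y : GluePts X l} {c : List (GluePts X l)}
    (hx : c.head? = some x) (hy : c.getLast? = some y) :
    quotDist γ x y ≤ chainCost γ c :=
  iInf₂_le c ⟨hx, hy⟩

theorem quotDist_inr_le_eCylDist (a b : AddCircle l × Icc (0:ℝ) l) :
    quotDist γ (.inr a) (.inr b) ≤ eCylDist a b := by
  simpa [chainCost, glueStep] using
    quotDist_le_chainCost γ (c := [.inr a, .inr b]) rfl rfl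

theorem le_quotDist_add_of_le_glueStep_add {f : GluePts X l → ℝ≥0∞}
    (hf : ∀ p q, f p ≤ glueStep γ p q + f q) (x y : GluePts X l) :
    f x ≤ quotDist γ x y + f y := by
  suffices ∀ c : List (GluePts X l), ∀ z, c.head? = some z → c.getLast? = some y →
      f z ≤ chainCost γ c + f y by
    simp only [quotDist, ENNReal.iInf_add]
    exact le_iInf₂ fun c (hc : _ ∧ _) => this c x hc.1 hc.2
  intro c
  induction c with
  | nil => simp
  | cons p t ih =>
    rintro z ⟨⟩ hy
    cases t with
    | nil => cases hy; simp [chainCost]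
    | cons q t =>
      calc f p ≤ glueStep γ p q + f q := hf p q
        _ ≤ glueStep γ p q + (chainCost γ (q :: t) + f y) := by
          gcongr; exact ih q rfl (by simpa using hy)
        _ = chainCost γ (p :: q :: t) + f y := by rw [chainCost, add_assoc]

noncomputable def collarPotential (y : AddCircle l × Icc (0:ℝ) l) : GluePts X l → ℝ≥0∞
  | .inl _ => ENNReal.ofReal y.2
  | .inr b => min (eCylDist b y) (ENNReal.ofReal (b.2 + y.2))

theorem collarPotential_le_glueStep_add (y : AddCircle l × Icc (0:ℝ) l) (p q : GluePts X l) :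
    collarPotential y p ≤ glueStep γ p q + collarPotential y q := by
  rcases p with x | b <;> rcases q with x' | b'
  · exact le_add_self
  · simp only [collarPotential, glueStep]
    split_ifs with h
    · rw [zero_add, h.2, zero_add]
      refine le_min ?_ le_rfl
      simpa [h.2, eCylDist_comm] using ofReal_sub_snd_le_eCylDist y b'
    · simp
  · simp only [collarPotential, glueStep]
    split_ifs with h
    · simp [h.2]
    · simp
  · simp only [collarPotential, glueStep, ← min_add_add_left]
    refine min_le_min (eCylDist_triangle b b' y) ?_
    calc ENNReal.ofReal (b.2 + y.2) = ENNReal.ofReal ((b.2 - b'.2) + (b'.2 + y.2)) := by ring_nf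
      _ ≤ ENNReal.ofReal (b.2 - b'.2) + ENNReal.ofReal (b'.2 + y.2) := ENNReal.ofReal_add_le
      _ ≤ _ := by gcongr; exact ofReal_sub_snd_le_eCylDist b b'

theorem min_eCylDist_le_quotDist (b y : AddCircle l × Icc (0:ℝ) l) :
    min (eCylDist b y) (ENNReal.ofReal (b.2 + y.2)) ≤ quotDist γ (.inr b) (.inr y) := by
  have := le_quotDist_add_of_le_glueStep_add γ (collarPotential_le_glueStep_add γ y)
    (.inr b) (.inr y)
  simpa [collarPotential, eCylDist_self] using this

end Collar

theorem collar_inclusion_lipschitz_and_local_isometry_general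
    (X : Type*) [MetricSpace X] (l : ℝ)
    (γ : AddCircle l → X) :
    (∀ a b : AddCircle l × Set.Icc (0:ℝ) l,
        quotDist γ (Sum.inr a) (Sum.inr b) ≤ eCylDist a b) ∧
    (∀ a : AddCircle l × Set.Icc (0:ℝ) l, 0 < (a.2 : ℝ) →
        ∃ ε > 0, ∀ b c : AddCircle l × Set.Icc (0:ℝ) l,
          cylDist a b < ε → cylDist a c < ε →
            quotDist γ (Sum.inr b) (Sum.inr c) = eCylDist b c) := by
  refine ⟨quotDist_inr_le_eCylDist γ, fun a ha => ⟨a.2 / 2, half_pos ha, fun b c hb hc => ?_⟩⟩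
  refine le_antisymm (quotDist_inr_le_eCylDist γ b c) ?_
  have hcollar : eCylDist b c ≤ ENNReal.ofReal (b.2 + c.2) :=
    ENNReal.ofReal_le_ofReal (cylDist_lt_snd_add_snd_of_lt_half hb hc).le
  simpa [min_eq_left hcollar] using min_eCylDist_le_quotDist γ b c

/-- The inclusion map `ι : S × [0,l] → X_Γ` is 1-Lipschitz, and its
restriction to `S × (0,l]` is a local isometry: every point of the open collar has a
neighbourhood on which the quotient distance agrees with the cylinder distance. -/
theorem collar_inclusion_lipschitz_and_local_isometry
    (X : Type*) [MetricSpace X] [CompleteSpace X] (l : ℝ) (hl : 0 < l)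
    (γ : AddCircle l → X) (hγLip : LipschitzWith 1 γ) (hγspeed : IsUnitSpeed γ) :
    (∀ a b : AddCircle l × Set.Icc (0:ℝ) l,
        quotDist γ (Sum.inr a) (Sum.inr b) ≤ eCylDist a b) ∧
    (∀ a : AddCircle l × Set.Icc (0:ℝ) l, 0 < (a.2 : ℝ) →
        ∃ ε > 0, ∀ b c : AddCircle l × Set.Icc (0:ℝ) l,
          cylDist a b < ε → cylDist a c < ε →
            quotDist γ (Sum.inr b) (Sum.inr c) = eCylDist b c) :=
  collar_inclusion_lipschitz_and_local_isometry_general X l γ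
end

section
/- If a seminorm σ on ℝ² satisfies the Q-quasi-conformality condition σ(v) ≤ Q·σ(w) for all unit vectors v,w ∈ S¹, then (max_{v ∈ S¹} σ(v))² ≤ Q²·J(σ), and also J(σ) ≤ (max_{v ∈ S¹} σ(v))². (This is the pointwise estimate behind Area(u) ≤ E²₊(u) ≤ Q²·Area(u) for Q-quasi-conformal Sobolev maps.) -/
open scoped ENNReal
open MeasureTheory

noncomputable section

/-- The Euclidean plane. -/
abbrev E2 := EuclideanSpace ℝ (Fin 2)

/-- The Busemann Jacobian of a seminorm `σ` on `ℝ²`: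
`J(σ) = π / L²({v : σ(v) ≤ 1})`, with the convention `J(σ) = 0` when the unit ball of
`σ` has infinite Lebesgue measure. -/
def busemannJ (σ : Seminorm ℝ E2) : ℝ≥0∞ :=
  ENNReal.ofReal Real.pi / volume {v : E2 | σ v ≤ 1}

end

/-! Let `M` be the maximum of `σ` on the unit circle. By homogeneity the quasi-conformality
condition gives `(M / Q) ‖v‖ ≤ σ v ≤ M ‖v‖`, so the unit ball of `σ` lies between the Euclidean
discs of radii `Q / M` and `1 / M`. The Busemann Jacobian is antitone in the unit ball and equals
`c²` for the seminorm `c ‖·‖`, which gives `(M / Q)² ≤ J(σ) ≤ M²`. -/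

open Metric
open scoped NNReal

namespace Seminorm

lemma le_of_forall_norm_eq_one {𝕜 E : Type*} [RCLike 𝕜] [NormedAddCommGroup E]
    [NormedSpace 𝕜 E] {p q : Seminorm 𝕜 E} (h : ∀ u : E, ‖u‖ = 1 → p u ≤ q u) : p ≤ q := by
  intro v
  rcases eq_or_ne v 0 with rfl | hv
  · simp
  have := h _ (norm_smul_inv_norm (𝕜 := 𝕜) hv)
  rw [map_smul_eq_mul, map_smul_eq_mul] at this
  exact le_of_mul_le_mul_left this (by simpa using hv)

variable {E : Type*} [NormedAddCommGroup E] [NormedSpace ℝ E] [FiniteDimensional ℝ E]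

lemma continuous_of_finiteDimensional (σ : Seminorm ℝ E) : Continuous σ :=
  continuousOn_univ.mp (σ.convexOn.continuousOn isOpen_univ)

lemma bddAbove_range_sphere (σ : Seminorm ℝ E) (x : E) (r : ℝ) :
    BddAbove (Set.range fun v : sphere x r => σ v) :=
  (isCompact_range (σ.continuous_of_finiteDimensional.comp continuous_subtype_val)).bddAbove

end Seminorm

lemma busemannJ_mono {σ τ : Seminorm ℝ E2} (h : σ ≤ τ) : busemannJ σ ≤ busemannJ τ :=
  ENNReal.div_le_div_left (measure_mono fun _ hv => (h _).trans hv) _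

lemma busemannJ_smul_normSeminorm (c : ℝ≥0) :
    busemannJ (c • normSeminorm ℝ E2) = (c : ℝ≥0∞) ^ 2 := by
  rcases eq_or_ne c 0 with rfl | hc
  · simp [busemannJ]
  have hball : {v : E2 | (c • normSeminorm ℝ E2) v ≤ 1} = closedBall 0 c⁻¹ := by
    rw [← Seminorm.closedBall_zero_eq, Seminorm.closedBall_smul _ (pos_iff_ne_zero.2 hc),
      closedBall_normSeminorm, one_div]
  rw [busemannJ, hball, EuclideanSpace.volume_closedBall_fin_two, ENNReal.ofReal_inv_of_pos (by positivity), ENNReal.ofReal_coe_nnreal, ENNReal.div_eq_inv_mul,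
    ENNReal.mul_inv (by simp) (by simp [Real.pi_pos]), ← ENNReal.inv_pow, inv_inv, mul_assoc,
    ENNReal.inv_mul_cancel (by simp [Real.pi_pos]) ENNReal.ofReal_ne_top, mul_one]

/-- If a seminorm `σ` on `ℝ²` is `Q`-quasi-conformal, i.e.
`σ(v) ≤ Q·σ(w)` for all unit vectors `v, w`, then with `M = max_{|v|=1} σ(v)` one has
`M² ≤ Q²·J(σ)` and `J(σ) ≤ M²`. This is the pointwise estimate behind
`Area(u) ≤ E²₊(u) ≤ Q²·Area(u)` for `Q`-quasi-conformal Sobolev maps. -/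
theorem quasiconformal_energy_area_estimate
    (σ : Seminorm ℝ E2) (Q : ℝ) (hQ : 1 ≤ Q)
    (hqc : ∀ v w : E2, ‖v‖ = 1 → ‖w‖ = 1 → σ v ≤ Q * σ w) :
    ENNReal.ofReal ((⨆ v : Metric.sphere (0 : E2) 1, σ v) ^ 2) ≤
        ENNReal.ofReal (Q ^ 2) * busemannJ σ ∧
      busemannJ σ ≤ ENNReal.ofReal ((⨆ v : Metric.sphere (0 : E2) 1, σ v) ^ 2) := by
  set M := ⨆ v : sphere (0 : E2) 1, σ v
  have hM : 0 ≤ M := Real.iSup_nonneg fun v => apply_nonneg σ v.1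
  have hQ₀ : 0 < Q := one_pos.trans_le hQ
  have : Nonempty (sphere (0 : E2) 1) := (NormedSpace.sphere_nonempty.2 zero_le_one).to_subtype
  have hupper : σ ≤ M.toNNReal • normSeminorm ℝ E2 :=
    Seminorm.le_of_forall_norm_eq_one fun u hu => by
      simpa [NNReal.smul_def, hu, hM] using
        le_ciSup (σ.bddAbove_range_sphere 0 1) ⟨u, by simpa using hu⟩
  have hlower : (M / Q).toNNReal • normSeminorm ℝ E2 ≤ σ :=
    Seminorm.le_of_forall_norm_eq_one fun u hu => by
      have : M ≤ Q * σ u := ciSup_le fun w => hqc w u (by simp) hu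
      simpa [NNReal.smul_def, hu, div_le_iff₀' hQ₀, hM, hQ₀.le]
  have hJupper := (busemannJ_mono hupper).trans_eq (busemannJ_smul_normSeminorm _)
  have hJlower := (busemannJ_smul_normSeminorm _).symm.trans_le (busemannJ_mono hlower)
  refine ⟨?_, by rwa [ENNReal.ofReal_pow hM]⟩
  calc ENNReal.ofReal (M ^ 2) = ENNReal.ofReal (Q ^ 2) * ENNReal.ofReal ((M / Q) ^ 2) := by
        rw [← ENNReal.ofReal_mul (by positivity)]
        field_simp
    _ = ENNReal.ofReal (Q ^ 2) * ENNReal.ofReal (M / Q) ^ 2 := by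
        rw [← ENNReal.ofReal_pow (by positivity)]
    _ ≤ ENNReal.ofReal (Q ^ 2) * busemannJ σ := by gcongr; exact hJlower
end
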